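/- Let S be a Boolean inverse ∧-monoid. The relation ≡ is the universal relation on the set of non-zero idempotents of S if, and only if, S is 0-simplifying. -/

import Mathlib

universe u

/-- An inverse monoid with zero: every element `a` has a unique generalized
inverse `a⁻¹`, and `0` is an absorbing element. -/
class InverseMonoidWithZero (S : Type u) extends Monoid S, Zero S, Inv S where
  zero_mul' : ∀ a : S, 0 * a = 0
  mul_zero' : ∀ a : S, a * 0 = 0
  mul_inv_mul : ∀ a : S, a * a⁻¹ * a = a
  inv_mul_inv : ∀ a : S, a⁻¹ * a * a⁻¹ = a⁻¹
  inv_unique : ∀ a b : S, a * b * a = a → b * a * b = b → b = a⁻¹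

section BasicDefs

variable {S : Type u}

/-- The natural partial order: `a ≤ b` iff `a = e * b` for some idempotent `e`. -/
def nle [InverseMonoidWithZero S] (a b : S) : Prop :=
  ∃ e : S, e * e = e ∧ a = e * b

/-- `a` and `b` are compatible if `a * b⁻¹` and `a⁻¹ * b` are idempotents. -/
def Compat [InverseMonoidWithZero S] (a b : S) : Prop :=
  (a * b⁻¹) * (a * b⁻¹) = a * b⁻¹ ∧ (a⁻¹ * b) * (a⁻¹ * b) = a⁻¹ * b

/-- `a` and `b` are orthogonal if `a * b⁻¹ = 0` and `a⁻¹ * b = 0`. -/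
def Orth [InverseMonoidWithZero S] (a b : S) : Prop :=
  a * b⁻¹ = 0 ∧ a⁻¹ * b = 0

end BasicDefs

/-- A distributive inverse monoid: every compatible pair has a join (for the
natural partial order), recorded by `sup`, and multiplication distributes over
these binary joins. -/
class DistributiveInverseMonoid (S : Type u) extends InverseMonoidWithZero S where
  sup : S → S → S
  le_sup_left : ∀ a b : S, Compat a b → nle a (sup a b)
  le_sup_right : ∀ a b : S, Compat a b → nle b (sup a b)
  sup_le : ∀ a b c : S, Compat a b → nle a c → nle b c → nle (sup a b) c
  mul_sup : ∀ a b c : S, Compat a b → c * sup a b = sup (c * a) (c * b)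
  sup_mul : ∀ a b c : S, Compat a b → sup a b * c = sup (a * c) (b * c)

/-- A Boolean inverse monoid: a distributive inverse monoid whose idempotents
form a Boolean algebra under the natural partial order; `compl` records the
complementation on idempotents. -/
class BooleanInverseMonoid (S : Type u) extends DistributiveInverseMonoid S where
  compl : S → S
  compl_idem : ∀ e : S, e * e = e → compl e * compl e = compl e
  mul_compl : ∀ e : S, e * e = e → e * compl e = 0
  sup_compl : ∀ e : S, e * e = e → sup e (compl e) = 1

/-- A Boolean inverse ∧-monoid: a Boolean inverse monoid in which every pair of
elements has a meet with respect to the natural partial order. -/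
class BooleanInverseMeetMonoid (S : Type u) extends BooleanInverseMonoid S where
  inf : S → S → S
  inf_le_left : ∀ a b : S, nle (inf a b) a
  inf_le_right : ∀ a b : S, nle (inf a b) b
  le_inf : ∀ a b c : S, nle c a → nle c b → nle c (inf a b)

section MoreDefs

variable {S : Type u}

/-- The join of a compatible pair. -/
def bsup [DistributiveInverseMonoid S] (a b : S) : S := DistributiveInverseMonoid.sup a b

/-- Complementation in the Boolean algebra of idempotents. -/
def bcompl [BooleanInverseMonoid S] (e : S) : S := BooleanInverseMonoid.compl e

/-- The binary meet. -/
def binf [BooleanInverseMeetMonoid S] (a b : S) : S := BooleanInverseMeetMonoid.inf a b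

/-- The fixed-point operator `φ(s) = s ∧ 1`. -/
def phi [BooleanInverseMeetMonoid S] (s : S) : S := binf s 1

/-- The support operator `σ(s) = \overline{φ(s)} ⋅ s⁻¹ s`. -/
def sigma [BooleanInverseMeetMonoid S] (s : S) : S := bcompl (phi s) * (s⁻¹ * s)

/-- An infinitesimal is a non-zero element that squares to zero. -/
def Infinitesimal [InverseMonoidWithZero S] (a : S) : Prop := a ≠ 0 ∧ a * a = 0

/-- A (two-sided) ideal. -/
def IsMIdeal [InverseMonoidWithZero S] (I : Set S) : Prop :=
  I.Nonempty ∧ ∀ a ∈ I, ∀ s : S, s * a ∈ I ∧ a * s ∈ I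

/-- A ∨-ideal: an ideal closed under joins of compatible pairs. -/
def IsVIdeal [DistributiveInverseMonoid S] (I : Set S) : Prop :=
  IsMIdeal I ∧ ∀ a ∈ I, ∀ b ∈ I, Compat a b → bsup a b ∈ I

end MoreDefs

/-- 0-simplifying: the only ∨-ideals are `{0}` and `S`. -/
def ZeroSimplifying (S : Type u) [DistributiveInverseMonoid S] : Prop :=
  ∀ I : Set S, IsVIdeal I → I = {0} ∨ I = Set.univ

/-- 0-simple: non-trivial and the only ideals are `{0}` and `S`. -/
def ZeroSimple (S : Type u) [InverseMonoidWithZero S] : Prop :=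
  (∃ s : S, s ≠ 0) ∧ ∀ I : Set S, IsMIdeal I → I = {0} ∨ I = Set.univ

/-- Fundamental: every element commuting with all idempotents is an idempotent. -/
def Fundamental (S : Type u) [InverseMonoidWithZero S] : Prop :=
  ∀ a : S, (∀ e : S, e * e = e → a * e = e * a) → a * a = a

/-- The Boolean algebra of idempotents is atomless. -/
def IdemAtomless (S : Type u) [InverseMonoidWithZero S] : Prop :=
  ∀ e : S, e * e = e → e ≠ 0 → ∃ f : S, f * f = f ∧ f ≠ 0 ∧ nle f e ∧ f ≠ e

section Filters

variable {S : Type u}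

/-- A filter in a Boolean inverse ∧-monoid: a nonempty subset closed under
binary meets and upward closed in the natural partial order. -/
def IsMFilter [BooleanInverseMeetMonoid S] (A : Set S) : Prop :=
  A.Nonempty ∧ (∀ a ∈ A, ∀ b ∈ A, binf a b ∈ A) ∧ ∀ a ∈ A, ∀ b : S, nle a b → b ∈ A

/-- An ultrafilter: a maximal proper filter. -/
def IsMUltrafilter [BooleanInverseMeetMonoid S] (A : Set S) : Prop :=
  IsMFilter A ∧ (0 : S) ∉ A ∧ ∀ B : Set S, IsMFilter B → (0 : S) ∉ B → A ⊆ B → A = B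

/-- A filter of the Boolean algebra of idempotents (meet of idempotents is
their product). -/
def IsIdemFilter [InverseMonoidWithZero S] (F : Set S) : Prop :=
  F.Nonempty ∧ (∀ e ∈ F, e * e = e) ∧ (∀ e ∈ F, ∀ f ∈ F, e * f ∈ F) ∧
    ∀ e ∈ F, ∀ f : S, f * f = f → nle e f → f ∈ F

/-- An ultrafilter of the Boolean algebra of idempotents. -/
def IsIdemUltrafilter [InverseMonoidWithZero S] (F : Set S) : Prop :=
  IsIdemFilter F ∧ (0 : S) ∉ F ∧
    ∀ G : Set S, IsIdemFilter G → (0 : S) ∉ G → F ⊆ G → F = G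

end Filters

section PencilDefs

variable {S : Type u}

/-- `Preceq e f`: there is a pencil from `e` to `f`, i.e. finitely many
elements `x₁, …, xₘ` with `r(xᵢ) ≤ f` for all `i` and `e = ⋁ d(xᵢ)`
(a least upper bound for the natural partial order). -/
def Preceq [DistributiveInverseMonoid S] (e f : S) : Prop :=
  ∃ l : List S, l ≠ [] ∧ (∀ x ∈ l, nle (x * x⁻¹) f) ∧
    (∀ x ∈ l, nle (x⁻¹ * x) e) ∧ ∀ c : S, (∀ x ∈ l, nle (x⁻¹ * x) c) → nle e c

/-- Piecewise factorizable: every element is a finite join of elements each of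
which lies beneath a unit. -/
def PiecewiseFactorizable (S : Type u) [DistributiveInverseMonoid S] : Prop :=
  ∀ s : S, ∃ l : List S, l ≠ [] ∧ (∀ x ∈ l, ∃ g : S, IsUnit g ∧ nle x g) ∧
    (∀ x ∈ l, nle x s) ∧ ∀ c : S, (∀ x ∈ l, nle x c) → nle s c

/-- A properly infinite idempotent. -/
def ProperlyInfinite [DistributiveInverseMonoid S] (e : S) : Prop :=
  ∃ x y : S, x⁻¹ * x = e ∧ y⁻¹ * y = e ∧ Orth (x * x⁻¹) (y * y⁻¹) ∧
    nle (bsup (x * x⁻¹) (y * y⁻¹)) e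

end PencilDefs

/-- Purely infinite: every non-zero idempotent is properly infinite. -/
def PurelyInfinite (S : Type u) [DistributiveInverseMonoid S] : Prop :=
  ∀ e : S, e * e = e → e ≠ 0 → ProperlyInfinite e

/-!
For an idempotent `f`, the elements `s` with `d(s) ⪯ f` form a ∨-ideal: it is closed under
multiplication because `d(st) = t⁻¹ d(s) t` and conjugation distributes over joins of idempotents,
and under compatible joins because `d(a ∨ b) ≤ d(a) ∨ d(b)` and pencils can be concatenated.
It contains `f`, so if `S` is 0-simplifying and `f ≠ 0` it is all of `S`, giving `e ⪯ f`.

Conversely, a ∨-ideal containing `f` contains every `e ⪯ f`: each `xᵢ = r(xᵢ) xᵢ` lies in it since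
`r(xᵢ) ≤ f`, and so does the join `e` of the `d(xᵢ)`. If `≡` is universal, a ∨-ideal containing a
non-zero element `a` thus contains every idempotent `e ⪯ d(a)`, hence every `s = s d(s)`.
-/

namespace InverseMonoidWithZero

variable {S : Type u} [InverseMonoidWithZero S]

theorem inv_inv (a : S) : a⁻¹⁻¹ = a :=
  (inv_unique _ _ (inv_mul_inv a) (mul_inv_mul a)).symm

theorem inv_eq_self_of_idem {e : S} (he : e * e = e) : e⁻¹ = e :=
  (inv_unique e e (by rw [he, he]) (by rw [he, he])).symm

theorem mul_inv_idem (a : S) : a * a⁻¹ * (a * a⁻¹) = a * a⁻¹ := by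
  rw [← mul_assoc, mul_inv_mul]

theorem inv_mul_idem (a : S) : a⁻¹ * a * (a⁻¹ * a) = a⁻¹ * a := by
  rw [← mul_assoc, inv_mul_inv]

theorem mul_idem {e f : S} (he : e * e = e) (hf : f * f = f) : e * f * (e * f) = e * f := by
  -- `f (ef)⁻¹ e` is another inverse of `ef`, which forces `(ef)⁻¹` to be idempotent
  have hinv : f * (e * f)⁻¹ * e = (e * f)⁻¹ := by
    refine inv_unique _ _ ?_ ?_
    · calc e * f * (f * (e * f)⁻¹ * e) * (e * f)
            = e * (f * f) * (e * f)⁻¹ * ((e * e) * f) := by simp only [mul_assoc]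
          _ = e * f := by rw [he, hf, mul_inv_mul]
    · calc f * (e * f)⁻¹ * e * (e * f) * (f * (e * f)⁻¹ * e)
            = f * ((e * f)⁻¹ * (e * e * (f * f)) * (e * f)⁻¹) * e := by simp only [mul_assoc]
          _ = f * (e * f)⁻¹ * e := by rw [he, hf, inv_mul_inv, mul_assoc]
  have hidem : (e * f)⁻¹ * (e * f)⁻¹ = (e * f)⁻¹ := by
    calc (e * f)⁻¹ * (e * f)⁻¹ = f * ((e * f)⁻¹ * (e * f) * (e * f)⁻¹) * e := by
          conv_lhs => rw [← hinv]
          simp only [mul_assoc]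
      _ = (e * f)⁻¹ := by rw [inv_mul_inv, hinv]
  rw [← inv_inv (e * f), inv_eq_self_of_idem hidem, hidem]

theorem idem_comm {e f : S} (he : e * e = e) (hf : f * f = f) : e * f = f * e := by
  have key : ∀ {a b : S}, a * a = a → b * b = b → a * b * (b * a) * (a * b) = a * b := by
    intro a b ha hb
    calc a * b * (b * a) * (a * b) = a * (b * b) * ((a * a) * b) := by simp only [mul_assoc]
      _ = a * b := by rw [ha, hb, mul_idem ha hb]
  rw [inv_unique _ _ (key he hf) (key hf he), inv_eq_self_of_idem (mul_idem he hf)]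

theorem mul_inv_rev (a b : S) : (a * b)⁻¹ = b⁻¹ * a⁻¹ := by
  refine (inv_unique _ _ ?_ ?_).symm
  · calc a * b * (b⁻¹ * a⁻¹) * (a * b) = a * ((b * b⁻¹) * (a⁻¹ * a)) * b := by
          simp only [mul_assoc]
      _ = (a * a⁻¹ * a) * (b * b⁻¹ * b) := by
          rw [idem_comm (mul_inv_idem b) (inv_mul_idem a)]; simp only [mul_assoc]
      _ = a * b := by rw [mul_inv_mul, mul_inv_mul]
  · calc b⁻¹ * a⁻¹ * (a * b) * (b⁻¹ * a⁻¹) = b⁻¹ * ((a⁻¹ * a) * (b * b⁻¹)) * a⁻¹ := by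
          simp only [mul_assoc]
      _ = (b⁻¹ * b * b⁻¹) * (a⁻¹ * a * a⁻¹) := by
          rw [idem_comm (inv_mul_idem a) (mul_inv_idem b)]; simp only [mul_assoc]
      _ = b⁻¹ * a⁻¹ := by rw [inv_mul_inv, inv_mul_inv]

theorem mul_inv_rev_mul_self (s t : S) : (s * t)⁻¹ * (s * t) = t⁻¹ * (s⁻¹ * s) * t := by
  rw [mul_inv_rev]; simp only [mul_assoc]

theorem mul_self_mul_inv_rev (s t : S) : s * t * (s * t)⁻¹ = s * (t * t⁻¹) * s⁻¹ := by
  rw [mul_inv_rev]; simp only [mul_assoc]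

theorem conj_idem (c : S) {e : S} (he : e * e = e) : c * e * c⁻¹ * (c * e * c⁻¹) = c * e * c⁻¹ :=
  calc c * e * c⁻¹ * (c * e * c⁻¹) = c * (e * (c⁻¹ * c)) * e * c⁻¹ := by simp only [mul_assoc]
    _ = (c * c⁻¹ * c) * (e * e) * c⁻¹ := by
        rw [idem_comm he (inv_mul_idem c)]; simp only [mul_assoc]
    _ = c * e * c⁻¹ := by rw [mul_inv_mul, he]

theorem inv_mul_self_ne_zero {a : S} (ha : a ≠ 0) : a⁻¹ * a ≠ 0 := by
  intro h
  apply ha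
  rw [← mul_inv_mul a, mul_assoc, h, mul_zero']

theorem nle_refl (a : S) : nle a a := ⟨a * a⁻¹, mul_inv_idem a, (mul_inv_mul a).symm⟩

theorem zero_nle (a : S) : nle 0 a := ⟨0, mul_zero' 0, (zero_mul' a).symm⟩

theorem nle_trans {a b c : S} (hab : nle a b) (hbc : nle b c) : nle a c := by
  obtain ⟨e, he, rfl⟩ := hab
  obtain ⟨f, hf, rfl⟩ := hbc
  exact ⟨e * f, mul_idem he hf, (mul_assoc e f c).symm⟩

theorem nle_antisymm {a b : S} (hab : nle a b) (hba : nle b a) : a = b := by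
  obtain ⟨e, he, rfl⟩ := hab
  obtain ⟨f, hf, hb⟩ := hba
  calc e * b = e * (f * (e * b)) := by rw [← hb]
    _ = f * ((e * e) * b) := by rw [← mul_assoc, idem_comm he hf]; simp only [mul_assoc]
    _ = b := by rw [he, ← hb]

theorem nle_mul_right {a b : S} (c : S) (h : nle a b) : nle (a * c) (b * c) := by
  obtain ⟨e, he, rfl⟩ := h
  exact ⟨e, he, mul_assoc e b c⟩

theorem nle_mul_left {a b : S} (c : S) (h : nle a b) : nle (c * a) (c * b) := by
  obtain ⟨e, he, rfl⟩ := h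
  refine ⟨c * e * c⁻¹, conj_idem c he, ?_⟩
  calc c * (e * b) = (c * c⁻¹ * c) * e * b := by rw [mul_inv_mul, mul_assoc]
    _ = c * ((c⁻¹ * c) * e) * b := by simp only [mul_assoc]
    _ = c * e * c⁻¹ * (c * b) := by rw [← idem_comm he (inv_mul_idem c)]; simp only [mul_assoc]

theorem nle_mul {a b c d : S} (hab : nle a b) (hcd : nle c d) : nle (a * c) (b * d) :=
  nle_trans (nle_mul_right c hab) (nle_mul_left b hcd)

theorem conj_nle_mul_inv (c : S) {e : S} (he : e * e = e) : nle (c * e * c⁻¹) (c * c⁻¹) :=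
  ⟨c * e * c⁻¹, conj_idem c he, by
    rw [show c * e * c⁻¹ * (c * c⁻¹) = c * e * (c⁻¹ * c * c⁻¹) by simp only [mul_assoc],
      inv_mul_inv]⟩

theorem idem_nle_one {e : S} (he : e * e = e) : nle e 1 := ⟨e, he, (mul_one e).symm⟩

theorem idem_of_nle_one {a : S} (h : nle a 1) : a * a = a := by
  obtain ⟨e, he, rfl⟩ := h
  rwa [mul_one]

theorem inv_mul_self_nle_of_mul_eq {x E : S} (hE : E * E = E) (h : x * E = x) :
    nle (x⁻¹ * x) E := by
  refine ⟨x⁻¹ * x, inv_mul_idem x, ?_⟩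
  calc x⁻¹ * x = (x * E)⁻¹ * (x * E) := by rw [h]
    _ = E * (x⁻¹ * x) * E := by rw [mul_inv_rev_mul_self, inv_eq_self_of_idem hE]
    _ = x⁻¹ * x * E := by rw [idem_comm hE (inv_mul_idem x), mul_assoc, hE]

theorem compat_of_idem {e f : S} (he : e * e = e) (hf : f * f = f) : Compat e f :=
  ⟨by rw [inv_eq_self_of_idem hf]; exact mul_idem he hf,
    by rw [inv_eq_self_of_idem he]; exact mul_idem he hf⟩

theorem compat_mul_idem (c : S) {e f : S} (he : e * e = e) (hf : f * f = f) :
    Compat (c * e) (c * f) := by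
  constructor
  · rw [mul_inv_rev, inv_eq_self_of_idem hf,
      show c * e * (f * c⁻¹) = c * (e * f) * c⁻¹ by simp only [mul_assoc]]
    exact conj_idem c (mul_idem he hf)
  · rw [mul_inv_rev, inv_eq_self_of_idem he,
      show e * c⁻¹ * (c * f) = e * (c⁻¹ * c) * f by simp only [mul_assoc]]
    exact mul_idem (mul_idem he (inv_mul_idem c)) hf

end InverseMonoidWithZero

namespace DistributiveInverseMonoid

open InverseMonoidWithZero

variable {S : Type u} [DistributiveInverseMonoid S]

theorem le_bsup_left {a b : S} (h : Compat a b) : nle a (bsup a b) := le_sup_left a b h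

theorem le_bsup_right {a b : S} (h : Compat a b) : nle b (bsup a b) := le_sup_right a b h

theorem bsup_le {a b c : S} (h : Compat a b) (ha : nle a c) (hb : nle b c) : nle (bsup a b) c :=
  sup_le a b c h ha hb

theorem bsup_idem {e f : S} (he : e * e = e) (hf : f * f = f) :
    bsup e f * bsup e f = bsup e f :=
  idem_of_nle_one (bsup_le (compat_of_idem he hf) (idem_nle_one he) (idem_nle_one hf))

def domSup : List S → S
  | [] => 0
  | x :: l => bsup (x⁻¹ * x) (domSup l)

theorem domSup_idem (l : List S) : domSup l * domSup l = domSup l := by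
  induction l with
  | nil => exact mul_zero' 0
  | cons x l ih => exact bsup_idem (inv_mul_idem x) ih

theorem compat_domSup (x : S) (l : List S) : Compat (x⁻¹ * x) (domSup l) :=
  compat_of_idem (inv_mul_idem x) (domSup_idem l)

theorem inv_mul_self_nle_domSup {l : List S} {x : S} (hx : x ∈ l) : nle (x⁻¹ * x) (domSup l) := by
  induction l with
  | nil => cases hx
  | cons y l ih =>
    rcases List.mem_cons.1 hx with rfl | hx
    · exact le_bsup_left (compat_domSup x l)
    · exact nle_trans (ih hx) (le_bsup_right (compat_domSup y l))

theorem domSup_le {l : List S} {c : S} (h : ∀ x ∈ l, nle (x⁻¹ * x) c) : nle (domSup l) c := by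
  induction l with
  | nil => exact zero_nle c
  | cons x l ih =>
    exact bsup_le (compat_domSup x l) (h x List.mem_cons_self)
      (ih fun y hy => h y (List.mem_cons_of_mem x hy))

theorem domSup_append (l l' : List S) : domSup (l ++ l') = bsup (domSup l) (domSup l') := by
  have hC := compat_of_idem (domSup_idem l) (domSup_idem l')
  refine nle_antisymm (domSup_le fun x hx => ?_) (bsup_le hC ?_ ?_)
  · rcases List.mem_append.1 hx with hx | hx
    · exact nle_trans (inv_mul_self_nle_domSup hx) (le_bsup_left hC)
    · exact nle_trans (inv_mul_self_nle_domSup hx) (le_bsup_right hC)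
  · exact domSup_le fun x hx => inv_mul_self_nle_domSup (List.mem_append_left l' hx)
  · exact domSup_le fun x hx => inv_mul_self_nle_domSup (List.mem_append_right l hx)

theorem domSup_map_mul_right (l : List S) (t : S) :
    domSup (l.map (· * t)) = t⁻¹ * domSup l * t := by
  induction l with
  | nil => rw [List.map_nil, domSup, mul_zero', zero_mul']
  | cons x l ih =>
    rw [List.map_cons, domSup, domSup, ih, mul_inv_rev_mul_self, bsup, bsup, mul_sup _ _ _ (compat_domSup x l),
      sup_mul _ _ _ (compat_mul_idem t⁻¹ (inv_mul_idem x) (domSup_idem l))]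

theorem inv_mul_bsup_nle {a b : S} (hC : Compat a b) :
    nle ((bsup a b)⁻¹ * bsup a b) (bsup (a⁻¹ * a) (b⁻¹ * b)) := by
  have hCd := compat_of_idem (inv_mul_idem a) (inv_mul_idem b)
  have hE := bsup_idem (inv_mul_idem a) (inv_mul_idem b)
  refine inv_mul_self_nle_of_mul_eq hE (nle_antisymm ?_ ?_)
  · simpa only [mul_one] using nle_mul_left (bsup a b) (idem_nle_one hE)
  · refine bsup_le hC ?_ ?_
    · simpa only [← mul_assoc, mul_inv_mul] using nle_mul (le_bsup_left hC) (le_bsup_left hCd)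
    · simpa only [← mul_assoc, mul_inv_mul] using nle_mul (le_bsup_right hC) (le_bsup_right hCd)

theorem preceq_iff_eq_domSup {e f : S} :
    Preceq e f ↔ ∃ l : List S, l ≠ [] ∧ (∀ x ∈ l, nle (x * x⁻¹) f) ∧ e = domSup l := by
  constructor
  · rintro ⟨l, hne, hr, hd, hlub⟩
    exact ⟨l, hne, hr, nle_antisymm (hlub _ fun x => inv_mul_self_nle_domSup) (domSup_le hd)⟩
  · rintro ⟨l, hne, hr, rfl⟩
    exact ⟨l, hne, hr, fun x => inv_mul_self_nle_domSup, fun c => domSup_le⟩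

theorem preceq_inv_mul_self {f : S} (hf : f * f = f) : Preceq (f⁻¹ * f) f := by
  rw [inv_eq_self_of_idem hf, hf]
  refine ⟨[f], List.cons_ne_nil f [], ?_, ?_, ?_⟩ <;>
    simp [inv_eq_self_of_idem hf, hf, nle_refl]

theorem preceq_mul_right {s f : S} (t : S) (h : Preceq (s⁻¹ * s) f) :
    Preceq ((s * t)⁻¹ * (s * t)) f := by
  obtain ⟨l, hne, hr, hs⟩ := preceq_iff_eq_domSup.1 h
  refine preceq_iff_eq_domSup.2 ⟨l.map (· * t), by simpa using hne, ?_, ?_⟩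
  · simp only [List.mem_map]
    rintro _ ⟨x, hx, rfl⟩
    rw [mul_self_mul_inv_rev]
    exact nle_trans (conj_nle_mul_inv x (mul_inv_idem t)) (hr x hx)
  · rw [domSup_map_mul_right, ← hs, mul_inv_rev_mul_self]

theorem preceq_of_nle {g e f : S} (he : e * e = e) (hge : nle g e) (h : Preceq e f) :
    Preceq g f := by
  have hd : (e * g)⁻¹ * (e * g) = g := by
    obtain ⟨k, hk, rfl⟩ := hge
    have hke : e * (k * e) = k * e := by rw [← mul_assoc, idem_comm he hk, mul_assoc, he]
    rw [hke, inv_eq_self_of_idem (mul_idem hk he), mul_idem hk he]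
  rw [← hd]
  exact preceq_mul_right g (by rwa [inv_eq_self_of_idem he, he])

theorem preceq_bsup {e e' f : S} (h : Preceq e f) (h' : Preceq e' f) : Preceq (bsup e e') f := by
  obtain ⟨l, hne, hr, rfl⟩ := preceq_iff_eq_domSup.1 h
  obtain ⟨l', -, hr', rfl⟩ := preceq_iff_eq_domSup.1 h'
  refine preceq_iff_eq_domSup.2 ⟨l ++ l', by simp [hne], ?_, (domSup_append l l').symm⟩
  intro x hx
  exact (List.mem_append.1 hx).elim (hr x) (hr' x)

end DistributiveInverseMonoid

open InverseMonoidWithZero DistributiveInverseMonoid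

section Ideals

variable {S : Type u}

theorem IsMIdeal.zero_mem [InverseMonoidWithZero S] {I : Set S} (hI : IsMIdeal I) : 0 ∈ I := by
  obtain ⟨⟨a, ha⟩, hmul⟩ := hI
  simpa only [zero_mul'] using (hmul a ha 0).1

theorem IsMIdeal.mem_of_nle [InverseMonoidWithZero S] {I : Set S} (hI : IsMIdeal I) {a b : S}
    (hb : b ∈ I) (h : nle a b) : a ∈ I := by
  obtain ⟨e, -, rfl⟩ := h
  exact (hI.2 b hb e).1

theorem IsMIdeal.eq_univ_of_inv_mul_self_mem [InverseMonoidWithZero S] {I : Set S}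
    (hI : IsMIdeal I) (h : ∀ s : S, s⁻¹ * s ∈ I) : I = Set.univ :=
  Set.eq_univ_of_forall fun s => by simpa only [← mul_assoc, mul_inv_mul] using (hI.2 _ (h s) s).1

variable [DistributiveInverseMonoid S] {I : Set S}

theorem IsVIdeal.domSup_mem (hI : IsVIdeal I) {l : List S} (h : ∀ x ∈ l, x ∈ I) :
    domSup l ∈ I := by
  induction l with
  | nil => exact hI.1.zero_mem
  | cons x l ih =>
    exact hI.2 _ (hI.1.2 x (h x List.mem_cons_self) x⁻¹).1 _
      (ih fun y hy => h y (List.mem_cons_of_mem x hy)) (compat_domSup x l)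

theorem IsVIdeal.mem_of_preceq (hI : IsVIdeal I) {e f : S} (hf : f ∈ I) (h : Preceq e f) :
    e ∈ I := by
  obtain ⟨l, -, hr, rfl⟩ := preceq_iff_eq_domSup.1 h
  refine hI.domSup_mem fun x hx => ?_
  rw [← mul_inv_mul x]
  exact (hI.1.2 _ (hI.1.mem_of_nle hf (hr x hx)) x).2

theorem isVIdeal_setOf_preceq {f : S} (hf : f * f = f) : IsVIdeal {s : S | Preceq (s⁻¹ * s) f} := by
  refine ⟨⟨⟨f, preceq_inv_mul_self hf⟩, fun a ha s => ⟨?_, preceq_mul_right s ha⟩⟩,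
    fun a ha b hb hC => ?_⟩
  · have hsa : s * a * (a⁻¹ * a) = s * a := by rw [mul_assoc, ← mul_assoc a, mul_inv_mul]
    exact preceq_of_nle (inv_mul_idem a) (inv_mul_self_nle_of_mul_eq (inv_mul_idem a) hsa) ha
  · exact preceq_of_nle (bsup_idem (inv_mul_idem a) (inv_mul_idem b)) (inv_mul_bsup_nle hC)
      (preceq_bsup ha hb)

theorem ZeroSimplifying.preceq (hS : ZeroSimplifying S) {e f : S} (he : e * e = e)
    (hf : f * f = f) (hf0 : f ≠ 0) : Preceq e f := by
  have hJ : {s : S | Preceq (s⁻¹ * s) f} = Set.univ :=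
    (hS _ (isVIdeal_setOf_preceq hf)).resolve_left fun h0 =>
      hf0 (h0.subset (preceq_inv_mul_self hf))
  have he' : Preceq (e⁻¹ * e) f := hJ.symm.subset (Set.mem_univ e)
  rwa [inv_eq_self_of_idem he, he] at he'

end Ideals

/-- In a Boolean inverse ∧-monoid, the relation `≡` (mutual
`⪯`) is universal on the non-zero idempotents iff `S` is 0-simplifying. -/
theorem statement3 (S : Type u) [BooleanInverseMeetMonoid S] :
    (∀ e f : S, e * e = e → e ≠ 0 → f * f = f → f ≠ 0 → Preceq e f ∧ Preceq f e) ↔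
      ZeroSimplifying S := by
  constructor
  · intro h I hI
    refine or_iff_not_imp_left.2 fun hI0 => hI.1.eq_univ_of_inv_mul_self_mem fun s => ?_
    obtain ⟨a, haI, ha0⟩ : ∃ a ∈ I, a ≠ 0 := by
      by_contra! hzero
      exact hI0 (Set.eq_singleton_iff_unique_mem.2 ⟨hI.1.zero_mem, hzero⟩)
    by_cases hs : s⁻¹ * s = 0
    · exact hs ▸ hI.1.zero_mem
    · exact hI.mem_of_preceq (hI.1.2 a haI a⁻¹).1
        (h _ _ (inv_mul_idem s) hs (inv_mul_idem a) (inv_mul_self_ne_zero ha0)).1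
  · intro hS e f he he0 hf hf0
    exact ⟨hS.preceq he hf hf0, hS.preceq hf he he0⟩
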